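/- For 0 < σ < π and real s > 1, ζ_CB(s; sin(σ/2)) = (1/Γ(s−1)) ∫_0^σ θ·(−2 log(sin(θ/2)/sin(σ/2)))^{s−2} dθ, where ζ_CB(s;z) = Σ_{m=1}^∞ (2z)^{2m}/(binom(2m,m) m^s). -/

import Mathlib

/-!
Substituting `u = -2 log (sin (θ/2) / sin (σ/2))` turns
`Γ(s-1) / (m+1)^(s-1) = ∫₀^∞ u^(s-2) e^{-(m+1)u} du` into an integral over `(0, σ)` whose integrand
carries the factor `(sin (θ/2) / sin (σ/2))^(2(m+1))`. Summing over `m` with the coefficients of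
`ζ_CB(s; sin (σ/2))` (termwise, as everything is nonnegative) produces the generating function
`∑ₙ (2x)^(2n) / (binom(2n,n) n) = 2x arcsin x / √(1 - x²)` at `x = sin (θ/2)`, which is
`θ tan (θ/2)` and cancels the Jacobian `cot (θ/2)`. The generating function in turn comes from the
Wallis integrals `∫₀^π sin^(2n-1) = 4^n / (binom(2n,n) n)` by summing a geometric series under the
integral.
-/

open Real Set MeasureTheory

noncomputable section

theorem hasSum_integral_of_nonneg {α ι : Type*} [MeasurableSpace α] {μ : Measure α} [Countable ι]
    {f : ι → α → ℝ} (hf : ∀ i, Integrable (f i) μ) (hf0 : ∀ i, 0 ≤ᵐ[μ] f i)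
    (hsum : Summable fun i => ∫ a, f i a ∂μ) :
    HasSum (fun i => ∫ a, f i a ∂μ) (∫ a, ∑' i, f i a ∂μ) :=
  hasSum_integral_of_summable_integral_norm hf <| hsum.congr fun i =>
    integral_congr_ae <| (hf0 i).mono fun _ ha => (Real.norm_of_nonneg ha).symm

theorem integrableOn_rpow_mul_exp_neg_mul {a r : ℝ} (ha : -1 < a) (hr : 0 < r) :
    IntegrableOn (fun u => u ^ a * exp (-(r * u))) (Ioi 0) := by
  simpa only [rpow_one, neg_mul] using integrableOn_rpow_mul_exp_neg_mul_rpow ha one_pos hr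

theorem sin_half_pos {θ : ℝ} (h0 : 0 < θ) (h2π : θ < 2 * π) : 0 < sin (θ / 2) :=
  sin_pos_of_pos_of_lt_pi (by linarith) (by linarith)

theorem cot_half_pos {θ : ℝ} (h0 : 0 < θ) (hπ : θ < π) : 0 < cot (θ / 2) := by
  rw [cot_eq_cos_div_sin]
  exact div_pos (cos_pos_of_mem_Ioo ⟨by linarith [pi_pos], by linarith⟩)
    (sin_half_pos h0 (by linarith [pi_pos]))

theorem abs_sin_half_lt_one {θ : ℝ} (hθ : |θ| < π) : |sin (θ / 2)| < 1 := by
  have hcos : 0 < cos (θ / 2) :=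
    cos_pos_of_mem_Ioo ⟨by linarith [neg_abs_le θ], by linarith [le_abs_self θ]⟩
  rw [← sq_lt_one_iff_abs_lt_one]
  nlinarith [sin_sq_add_cos_sq (θ / 2)]

/-- The term of index `m + 1` of `ζ_CB(s; x) = ∑_{n ≥ 1} (2x)^(2n) / (binom(2n,n) n^s)`. -/
def zetaCBTerm (s x : ℝ) (m : ℕ) : ℝ :=
  (2 * x) ^ (2 * (m + 1)) / ((Nat.centralBinom (m + 1) : ℝ) * ((m : ℝ) + 1) ^ s)

theorem zetaCBTerm_nonneg (s x : ℝ) (m : ℕ) : 0 ≤ zetaCBTerm s x m := by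
  rw [zetaCBTerm, pow_mul]
  positivity

theorem zetaCBTerm_antitone (x : ℝ) (m : ℕ) : Antitone fun s => zetaCBTerm s x m := by
  intro s t hst
  dsimp only
  have hm : (1 : ℝ) ≤ m + 1 := by simp
  have hc : (0 : ℝ) < Nat.centralBinom (m + 1) := mod_cast Nat.centralBinom_pos _
  rw [zetaCBTerm, zetaCBTerm]
  exact div_le_div_of_nonneg_left (by rw [pow_mul]; positivity) (by positivity)
    (mul_le_mul_of_nonneg_left (rpow_le_rpow_of_exponent_le hm hst) (by positivity))

theorem zetaCBTerm_one_mul_one_div_rpow (s x : ℝ) (m : ℕ) :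
    zetaCBTerm 1 x m * (1 / (m + 1)) ^ (s - 1) = zetaCBTerm s x m := by
  have hm : (0 : ℝ) < m + 1 := by positivity
  rw [zetaCBTerm, zetaCBTerm, rpow_one, div_rpow zero_le_one hm.le, one_rpow, rpow_sub_one hm.ne']
  field_simp

theorem four_pow_div_centralBinom_mul_eq_integral_sin_pow (m : ℕ) :
    (4 : ℝ) ^ (m + 1) / (Nat.centralBinom (m + 1) * (m + 1)) =
      ∫ φ in 0..π, sin φ ^ (2 * m + 1) := by
  rw [integral_sin_pow_odd]
  induction m with
  | zero => norm_num [Nat.centralBinom_eq_two_mul_choose]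
  | succ m ih =>
    have hrec : ((m + 2 : ℕ) : ℝ) * Nat.centralBinom (m + 2) =
        2 * (2 * (m + 1) + 1) * Nat.centralBinom (m + 1) := by
      exact_mod_cast Nat.succ_mul_centralBinom_succ (m + 1)
    have hpos : (0 : ℝ) < Nat.centralBinom (m + 1) := mod_cast Nat.centralBinom_pos _
    rw [Finset.prod_range_succ, ← mul_assoc, ← ih]
    push_cast at hrec ⊢
    rw [pow_succ, show ((m : ℝ) + 1 + 1) = m + 2 by ring,
      mul_comm (Nat.centralBinom (m + 2) : ℝ), hrec]
    field_simp
    ring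

theorem zetaCBTerm_one_eq_integral (x : ℝ) (m : ℕ) :
    zetaCBTerm 1 x m = ∫ φ in 0..π, (x ^ 2) ^ (m + 1) * sin φ ^ (2 * m + 1) := by
  rw [intervalIntegral.integral_const_mul, ← four_pow_div_centralBinom_mul_eq_integral_sin_pow,
    zetaCBTerm, rpow_one, mul_pow, pow_mul, pow_mul]
  ring

theorem zetaCBTerm_one_le (x : ℝ) (m : ℕ) : zetaCBTerm 1 x m ≤ π * (x ^ 2) ^ (m + 1) := by
  rw [zetaCBTerm_one_eq_integral]
  calc _ ≤ ‖∫ φ in 0..π, (x ^ 2) ^ (m + 1) * sin φ ^ (2 * m + 1)‖ := Real.le_norm_self _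
    _ ≤ (x ^ 2) ^ (m + 1) * |π - 0| := by
        refine intervalIntegral.norm_integral_le_of_norm_le_const fun φ _ => ?_
        rw [norm_mul, norm_pow, norm_pow, norm_pow, Real.norm_eq_abs, Real.norm_eq_abs, sq_abs]
        exact mul_le_of_le_one_right (by positivity) (pow_le_one₀ (abs_nonneg _) (abs_sin_le_one φ))
    _ = π * (x ^ 2) ^ (m + 1) := by rw [sub_zero, abs_of_pos pi_pos, mul_comm]

theorem integral_sq_mul_sin_div_one_sub_sq_mul_sin_sq {x : ℝ} (hx : |x| < 1) :
    ∫ φ in 0..π, x ^ 2 * sin φ / (1 - x ^ 2 * sin φ ^ 2) = 2 * x * arcsin x / √(1 - x ^ 2) := by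
  have hx2 : 0 < 1 - x ^ 2 := by nlinarith [abs_nonneg x, sq_abs x]
  set c := √(1 - x ^ 2)
  have hc0 : 0 < c := sqrt_pos.mpr hx2
  have hc2 : c ^ 2 = 1 - x ^ 2 := sq_sqrt hx2.le
  have hden : ∀ φ, 0 < 1 - x ^ 2 * sin φ ^ 2 := fun φ => by
    nlinarith [sin_sq_le_one φ, sq_nonneg x]
  have hderiv : ∀ φ ∈ uIcc 0 π, HasDerivAt (fun φ => -(x / c) * arctan (x * cos φ / c))
      (x ^ 2 * sin φ / (1 - x ^ 2 * sin φ ^ 2)) φ := by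
    intro φ _
    refine ((((hasDerivAt_cos φ).const_mul x).div_const c).arctan.const_mul
      (-(x / c))).congr_deriv ?_
    have := hden φ
    field_simp
    linear_combination (-(x ^ 2 * sin φ)) * hc2 - x ^ 4 * sin φ * sin_sq_add_cos_sq φ
  rw [intervalIntegral.integral_eq_sub_of_hasDerivAt hderiv
    ((by fun_prop (disch := exact fun φ => (hden φ).ne') :
      Continuous fun φ => x ^ 2 * sin φ / (1 - x ^ 2 * sin φ ^ 2)).intervalIntegrable _ _),
    cos_pi, cos_zero, arcsin_eq_arctan ⟨by linarith [neg_abs_le x], by linarith [le_abs_self x]⟩]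
  simp only [mul_neg, mul_one, neg_div, arctan_neg]
  ring

theorem hasSum_zetaCBTerm_one {x : ℝ} (hx : |x| < 1) :
    HasSum (zetaCBTerm 1 x) (2 * x * arcsin x / √(1 - x ^ 2)) := by
  have hx2 : x ^ 2 < 1 := by nlinarith [abs_nonneg x, sq_abs x]
  set f : ℕ → ℝ → ℝ := fun m φ => (x ^ 2) ^ (m + 1) * sin φ ^ (2 * m + 1)
  have hgeom : ∀ φ, HasSum (f · φ) (x ^ 2 * sin φ / (1 - x ^ 2 * sin φ ^ 2)) := fun φ => by
    have hr : x ^ 2 * sin φ ^ 2 < 1 := by nlinarith [sin_sq_le_one φ, sq_nonneg x]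
    have h := (hasSum_geometric_of_lt_one (by positivity) hr).mul_left (x ^ 2 * sin φ)
    rw [← div_eq_mul_inv] at h
    exact h.congr_fun fun m => by simp only [f]; ring
  have hf0 : ∀ m, 0 ≤ᵐ[volume.restrict (Ioc 0 π)] f m := fun m => by
    filter_upwards [ae_restrict_mem measurableSet_Ioc] with φ hφ
    exact mul_nonneg (by positivity) (pow_nonneg (sin_nonneg_of_nonneg_of_le_pi hφ.1.le hφ.2) _)
  have hsum : Summable (zetaCBTerm 1 x) :=
    .of_nonneg_of_le (zetaCBTerm_nonneg 1 x) (zetaCBTerm_one_le x)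
      (((summable_geometric_of_lt_one (sq_nonneg x) hx2).comp_injective
        (add_left_injective 1)).mul_left π)
  have hterm : ∀ m, ∫ φ in Ioc 0 π, f m φ = zetaCBTerm 1 x m := fun m => by
    rw [zetaCBTerm_one_eq_integral, intervalIntegral.integral_of_le pi_pos.le]
  have h := hasSum_integral_of_nonneg (fun m => (by fun_prop : Continuous (f m)).integrableOn_Ioc)
    hf0 (by simpa only [hterm] using hsum)
  simpa only [hterm, fun φ => (hgeom φ).tsum_eq, ← intervalIntegral.integral_of_le pi_pos.le,
    integral_sq_mul_sin_div_one_sub_sq_mul_sin_sq hx] using h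

theorem hasSum_zetaCBTerm_one_sin_half {θ : ℝ} (hθ : |θ| < π) :
    HasSum (zetaCBTerm 1 (sin (θ / 2))) (θ * tan (θ / 2)) := by
  have hθ2 : θ / 2 ∈ Ioo (-(π / 2)) (π / 2) := by
    constructor <;> linarith [neg_abs_le θ, le_abs_self θ]
  have hsqrt : √(1 - sin (θ / 2) ^ 2) = cos (θ / 2) := by
    rw [← cos_sq', sqrt_sq (cos_pos_of_mem_Ioo hθ2).le]
  convert hasSum_zetaCBTerm_one (abs_sin_half_lt_one hθ) using 1
  rw [hsqrt, arcsin_sin hθ2.1.le hθ2.2.le, tan_eq_sin_div_cos]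
  ring

theorem summable_zetaCBTerm {s x : ℝ} (hs : 1 ≤ s) (hx : |x| < 1) : Summable (zetaCBTerm s x) :=
  .of_nonneg_of_le (zetaCBTerm_nonneg s x) (fun m => zetaCBTerm_antitone x m hs)
    (hasSum_zetaCBTerm_one hx).summable

def logSineRatio (σ θ : ℝ) : ℝ := -2 * log (sin (θ / 2) / sin (σ / 2))

section logSineRatio

variable {σ θ : ℝ}

theorem hasDerivAt_logSineRatio (hθ : sin (θ / 2) ≠ 0) (hσ : sin (σ / 2) ≠ 0) :
    HasDerivAt (logSineRatio σ) (-cot (θ / 2)) θ := by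
  have h := ((((hasDerivAt_id θ).div_const 2).sin.div_const (sin (σ / 2))).log
    (div_ne_zero hθ hσ)).const_mul (-2)
  simp only [id] at h
  refine h.congr_deriv ?_
  rw [cot_eq_cos_div_sin]
  field_simp

theorem strictAntiOn_logSineRatio (hσπ : σ ≤ π) : StrictAntiOn (logSineRatio σ) (Ioc 0 σ) := by
  intro a ha b hb hab
  have hsa : 0 < sin (a / 2) := sin_half_pos ha.1 (by linarith [ha.2, pi_pos])
  have hσ : 0 < sin (σ / 2) := sin_half_pos (ha.1.trans_le ha.2) (by linarith [pi_pos])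
  have hab' : sin (a / 2) < sin (b / 2) :=
    sin_lt_sin_of_lt_of_le_pi_div_two (by linarith [ha.1, pi_pos]) (by linarith [hb.2])
      (by linarith)
  have := log_lt_log (div_pos hsa hσ) (div_lt_div_of_pos_right hab' hσ)
  simp only [logSineRatio]
  linarith

theorem logSineRatio_self : logSineRatio σ σ = 0 := by
  rcases eq_or_ne (sin (σ / 2)) 0 with h | h <;> simp [logSineRatio, h]

theorem image_logSineRatio_Ioo (hσ0 : 0 < σ) (hσπ : σ ≤ π) :
    logSineRatio σ '' Ioo 0 σ = Ioi 0 := by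
  have hσ : 0 < sin (σ / 2) := sin_half_pos hσ0 (by linarith [pi_pos])
  refine Subset.antisymm ?_ fun u (hu : 0 < u) => ?_
  · rintro _ ⟨θ, hθ, rfl⟩
    rw [mem_Ioi, ← logSineRatio_self (σ := σ)]
    exact strictAntiOn_logSineRatio hσπ ⟨hθ.1, hθ.2.le⟩ ⟨hσ0, le_rfl⟩ hθ.2
  -- the preimage of `u` is `2 arcsin (sin (σ / 2) e^{-u/2})`
  set y := sin (σ / 2) * exp (-u / 2)
  have hy0 : 0 < y := by positivity
  have hyσ : y < sin (σ / 2) := mul_lt_of_lt_one_right hσ (Real.exp_lt_one_iff.mpr (by linarith))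
  have hy1 : y ≤ 1 := hyσ.le.trans (sin_le_one _)
  refine ⟨2 * arcsin y, ⟨by linarith [arcsin_pos.mpr hy0], ?_⟩, ?_⟩
  · have := strictMonoOn_arcsin ⟨by linarith, hy1⟩ ⟨by linarith, sin_le_one _⟩ hyσ
    rw [arcsin_sin (by linarith) (by linarith)] at this
    linarith
  · rw [logSineRatio, mul_div_cancel_left₀ _ two_ne_zero, sin_arcsin (by linarith) hy1,
      mul_div_cancel_left₀ _ hσ.ne', log_exp]
    ring

theorem zetaCBTerm_mul_exp_neg_logSineRatio (s : ℝ) (m : ℕ) (hθ : 0 < sin (θ / 2))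
    (hσ : 0 < sin (σ / 2)) :
    zetaCBTerm s (sin (σ / 2)) m * exp (-((m + 1) * logSineRatio σ θ)) =
      zetaCBTerm s (sin (θ / 2)) m := by
  have hexp : exp (-((m + 1) * logSineRatio σ θ)) =
      (sin (θ / 2) / sin (σ / 2)) ^ (2 * (m + 1)) := by
    rw [← exp_log (div_pos hθ hσ), ← exp_nat_mul, logSineRatio]
    push_cast
    ring_nf
  rw [hexp, zetaCBTerm, zetaCBTerm, div_mul_eq_mul_div, ← mul_pow]
  field_simp

variable {E : Type*} [NormedAddCommGroup E] [NormedSpace ℝ E]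

theorem hasDerivWithinAt_logSineRatio_Ioo (hσπ : σ ≤ π) (hθ : θ ∈ Ioo 0 σ) :
    HasDerivWithinAt (logSineRatio σ) (-cot (θ / 2)) (Ioo 0 σ) θ :=
  (hasDerivAt_logSineRatio (sin_half_pos hθ.1 (by linarith [hθ.2, pi_pos])).ne'
    (sin_half_pos (hθ.1.trans hθ.2) (by linarith [pi_pos])).ne').hasDerivWithinAt

theorem abs_deriv_logSineRatio_smul_eqOn (hσπ : σ ≤ π) (g : ℝ → E) :
    EqOn (fun θ => |-cot (θ / 2)| • g (logSineRatio σ θ))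
      (fun θ => cot (θ / 2) • g (logSineRatio σ θ)) (Ioo 0 σ) := fun θ hθ => by
  simp only [abs_neg, abs_of_pos (cot_half_pos hθ.1 (hθ.2.trans_le hσπ))]

theorem integral_Ioi_eq_integral_cot_smul_logSineRatio (hσ0 : 0 < σ) (hσπ : σ ≤ π)
    (g : ℝ → E) :
    ∫ u in Ioi 0, g u = ∫ θ in Ioo 0 σ, cot (θ / 2) • g (logSineRatio σ θ) := by
  rw [← image_logSineRatio_Ioo hσ0 hσπ, integral_image_eq_integral_abs_deriv_smul measurableSet_Ioo
    (fun _ => hasDerivWithinAt_logSineRatio_Ioo hσπ)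
    ((strictAntiOn_logSineRatio hσπ).injOn.mono Ioo_subset_Ioc_self)]
  exact setIntegral_congr_fun measurableSet_Ioo (abs_deriv_logSineRatio_smul_eqOn hσπ g)

theorem integrableOn_Ioi_iff_integrableOn_cot_smul_logSineRatio (hσ0 : 0 < σ) (hσπ : σ ≤ π)
    (g : ℝ → E) :
    IntegrableOn g (Ioi 0) ↔
      IntegrableOn (fun θ => cot (θ / 2) • g (logSineRatio σ θ)) (Ioo 0 σ) := by
  rw [← image_logSineRatio_Ioo hσ0 hσπ, integrableOn_image_iff_integrableOn_abs_deriv_smul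
    measurableSet_Ioo (fun _ => hasDerivWithinAt_logSineRatio_Ioo hσπ)
    ((strictAntiOn_logSineRatio hσπ).injOn.mono Ioo_subset_Ioc_self)]
  exact integrableOn_congr_fun (abs_deriv_logSineRatio_smul_eqOn hσπ g) measurableSet_Ioo

end logSineRatio

def zetaCBIntegrand (σ s : ℝ) (m : ℕ) (θ : ℝ) : ℝ :=
  cot (θ / 2) * logSineRatio σ θ ^ (s - 2) * zetaCBTerm 1 (sin (θ / 2)) m

section zetaCBIntegrand

variable {σ s : ℝ}

theorem zetaCBIntegrand_eqOn (hσπ : σ ≤ π) (m : ℕ) :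
    EqOn (fun θ => zetaCBTerm 1 (sin (σ / 2)) m *
        cot (θ / 2) • (logSineRatio σ θ ^ (s - 2) * exp (-((m + 1) * logSineRatio σ θ))))
      (zetaCBIntegrand σ s m) (Ioo 0 σ) := fun θ hθ => by
  have hθ' : 0 < sin (θ / 2) := sin_half_pos hθ.1 (by linarith [hθ.2, pi_pos])
  have hσ : 0 < sin (σ / 2) := sin_half_pos (hθ.1.trans hθ.2) (by linarith [pi_pos])
  simp only [zetaCBIntegrand, smul_eq_mul, ← zetaCBTerm_mul_exp_neg_logSineRatio 1 m hθ' hσ]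
  ring

theorem integrableOn_zetaCBIntegrand (hσ0 : 0 < σ) (hσπ : σ ≤ π) (hs : 1 < s) (m : ℕ) :
    IntegrableOn (zetaCBIntegrand σ s m) (Ioo 0 σ) :=
  IntegrableOn.congr_fun (((integrableOn_Ioi_iff_integrableOn_cot_smul_logSineRatio hσ0 hσπ _).mp
    (integrableOn_rpow_mul_exp_neg_mul (by linarith : -1 < s - 2) m.cast_add_one_pos)).const_mul _)
      (zetaCBIntegrand_eqOn hσπ m) measurableSet_Ioo

theorem integral_zetaCBIntegrand (hσ0 : 0 < σ) (hσπ : σ ≤ π) (hs : 1 < s) (m : ℕ) :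
    ∫ θ in Ioo 0 σ, zetaCBIntegrand σ s m θ = Gamma (s - 1) * zetaCBTerm s (sin (σ / 2)) m := by
  have hcov := integral_Ioi_eq_integral_cot_smul_logSineRatio hσ0 hσπ
    fun u => u ^ (s - 2) * exp (-((m + 1) * u))
  rw [← setIntegral_congr_fun measurableSet_Ioo (zetaCBIntegrand_eqOn hσπ m), integral_const_mul,
    ← hcov, show s - 2 = s - 1 - 1 by ring,
    integral_rpow_mul_exp_neg_mul_Ioi (by linarith) (by positivity),
    ← zetaCBTerm_one_mul_one_div_rpow s]
  ring

theorem zetaCBIntegrand_nonneg (hσπ : σ ≤ π) (m : ℕ) {θ : ℝ} (hθ : θ ∈ Ioo 0 σ) :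
    0 ≤ zetaCBIntegrand σ s m θ := by
  have ht : logSineRatio σ θ ∈ Ioi 0 := by
    rw [← image_logSineRatio_Ioo (hθ.1.trans hθ.2) hσπ]
    exact mem_image_of_mem _ hθ
  exact mul_nonneg (mul_nonneg (cot_half_pos hθ.1 (hθ.2.trans_le hσπ)).le
    (rpow_nonneg (mem_Ioi.mp ht).le _)) (zetaCBTerm_nonneg 1 _ m)

theorem hasSum_zetaCBIntegrand (hσπ : σ ≤ π) {θ : ℝ} (hθ : θ ∈ Ioo 0 σ) :
    HasSum (zetaCBIntegrand σ s · θ) (θ * logSineRatio σ θ ^ (s - 2)) := by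
  have hθπ : θ < π := hθ.2.trans_le hσπ
  have hsin : sin (θ / 2) ≠ 0 := (sin_half_pos hθ.1 (by linarith [pi_pos])).ne'
  have hcos : cos (θ / 2) ≠ 0 :=
    (cos_pos_of_mem_Ioo ⟨by linarith [pi_pos, hθ.1], by linarith⟩).ne'
  have h := (hasSum_zetaCBTerm_one_sin_half (abs_lt.mpr ⟨by linarith [hθ.1], hθπ⟩)).mul_left
    (cot (θ / 2) * logSineRatio σ θ ^ (s - 2))
  have hval : cot (θ / 2) * logSineRatio σ θ ^ (s - 2) * (θ * tan (θ / 2)) =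
      θ * logSineRatio σ θ ^ (s - 2) := by
    rw [cot_eq_cos_div_sin, tan_eq_sin_div_cos]
    field_simp
  rwa [hval] at h

end zetaCBIntegrand

end

open Real in
theorem zetaCB_log_sine_integral (σ s : ℝ) (hσ0 : 0 < σ) (hσπ : σ < π) (hs : 1 < s) :
    ∑' m : ℕ, (2 * Real.sin (σ / 2)) ^ (2 * (m + 1)) /
        ((Nat.choose (2 * (m + 1)) (m + 1) : ℝ) * ((m : ℝ) + 1) ^ s) =
      (1 / Real.Gamma (s - 1)) *
        ∫ θ in (0 : ℝ)..σ,
          θ * (-2 * Real.log (Real.sin (θ / 2) / Real.sin (σ / 2))) ^ (s - 2) := by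
  change ∑' m, zetaCBTerm s (sin (σ / 2)) m =
    1 / Gamma (s - 1) * ∫ θ in 0..σ, θ * logSineRatio σ θ ^ (s - 2)
  have hΓ : 0 < Gamma (s - 1) := Gamma_pos_of_pos (by linarith)
  have hsummable := (summable_zetaCBTerm hs.le
    (abs_sin_half_lt_one (abs_lt.mpr ⟨by linarith, hσπ⟩))).mul_left (Gamma (s - 1))
  have hsum := hasSum_integral_of_nonneg (integrableOn_zetaCBIntegrand hσ0 hσπ.le hs)
    (fun m => (ae_restrict_mem measurableSet_Ioo).mono fun θ => zetaCBIntegrand_nonneg hσπ.le m)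
    (by simpa only [integral_zetaCBIntegrand hσ0 hσπ.le hs] using hsummable)
  rw [funext (integral_zetaCBIntegrand hσ0 hσπ.le hs), setIntegral_congr_fun measurableSet_Ioo
    fun θ hθ => (hasSum_zetaCBIntegrand hσπ.le hθ).tsum_eq] at hsum
  rw [intervalIntegral.integral_of_le hσ0.le, integral_Ioc_eq_integral_Ioo, ← hsum.tsum_eq,
    tsum_mul_left]
  field_simp
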